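/- Let n ≥ 1, N ≥ 1, q > 0, let Ω ⊆ ℝ^n be measurable, and let w₁, w₂ ∈ L^{q+1}(Ω, ℝ^N). Then there exists a constant c > 0 depending only on q such that ∫_Ω |w₁ − w₂|^{q+1} dx ≤ c·( ∫_Ω (|w₁| + |w₂|)^{q+1} dx )^{1/2} · ( ∫_Ω |w₁^{⟨(q+1)/2⟩} − w₂^{⟨(q+1)/2⟩}|² dx )^{1/2}, where both integrals on the right-hand side are finite. -/

import Mathlib

/-!
With `α = (q + 1) / 2 > 1 / 2`, the theorem is the integrated form of the pointwise inequality
`|a - b|^{2α} ≤ C (|a| + |b|)^α |a^{⟨α⟩} - b^{⟨α⟩}|`, followed by Cauchy–Schwarz.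
Pointwise, write `a = A^{⟨1/α⟩}`, `b = B^{⟨1/α⟩}` with `A = a^{⟨α⟩}`, `B = b^{⟨α⟩}`.
For `α ≥ 1` the map `u ↦ u^{⟨1/α⟩}` is `1/α`-Hölder, so `|a - b|^α ≤ 3^α |A - B|`, and the
other factor `|a - b|^α` is at most `(|a| + |b|)^α`. For `α ≤ 1` it is locally Lipschitz:
`|a - b| ≤ 2 max(|a|, |b|)^{1-α} |A - B|`, and `|a - b|^{2α-1} ≤ (|a| + |b|)^{2α-1}`.
-/

open MeasureTheory

/-- For `α > 0` and a vector `u`, the power `u^{⟨α⟩} := ‖u‖^(α-1) • u` (with `0^{⟨α⟩} = 0`). -/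
noncomputable def vpow {E : Type*} [NormedAddCommGroup E] [NormedSpace ℝ E] (α : ℝ) (u : E) : E :=
  (‖u‖ ^ (α - 1)) • u

section Pointwise

variable {E : Type*} [NormedAddCommGroup E] [NormedSpace ℝ E]

lemma vpow_one (u : E) : vpow 1 u = u := by simp [vpow]

lemma norm_vpow {α : ℝ} (hα : 0 < α) (u : E) : ‖vpow α u‖ = ‖u‖ ^ α := by
  rcases eq_or_ne u 0 with rfl | hu
  · simp [vpow, Real.zero_rpow hα.ne']
  · rw [vpow, norm_smul, Real.norm_of_nonneg (by positivity),
      ← Real.rpow_add_one (norm_ne_zero_iff.mpr hu), sub_add_cancel]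

lemma vpow_vpow {α : ℝ} (hα : 0 < α) (γ : ℝ) (u : E) : vpow γ (vpow α u) = vpow (γ * α) u := by
  rcases eq_or_ne u 0 with rfl | hu
  · simp [vpow]
  · rw [vpow, norm_vpow hα, vpow, vpow, smul_smul, ← Real.rpow_mul (norm_nonneg u),
      ← Real.rpow_add (norm_pos_iff.mpr hu)]
    ring_nf

lemma vpow_inv_vpow {α : ℝ} (hα : 0 < α) (u : E) : vpow α⁻¹ (vpow α u) = u := by
  rw [vpow_vpow hα, inv_mul_cancel₀ hα.ne', vpow_one]

lemma norm_vpow_sub_vpow_le {γ : ℝ} (hγ0 : 0 < γ) (hγ1 : γ ≤ 1) (A B : E) :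
    ‖vpow γ A - vpow γ B‖ ≤ 3 * ‖A - B‖ ^ γ := by
  wlog hBA : ‖B‖ ≤ ‖A‖ generalizing A B
  · rw [norm_sub_rev, norm_sub_rev A]
    exact this B A (le_of_not_ge hBA)
  rcases eq_or_ne A B with rfl | hAB
  · simp only [sub_self, norm_zero]
    positivity
  set s := ‖A‖
  set t := ‖B‖
  set d := ‖A - B‖
  have hd : 0 < d := norm_pos_iff.mpr (sub_ne_zero.mpr hAB)
  have hsd : s ≤ t + d := by linarith [norm_sub_norm_le A B]
  rcases le_or_gt t d with htd | htd
  · have h2d : s ^ γ ≤ 2 * d ^ γ := calc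
      s ^ γ ≤ (2 * d) ^ γ := by gcongr; linarith
      _ = 2 ^ γ * d ^ γ := Real.mul_rpow zero_le_two hd.le
      _ ≤ 2 * d ^ γ := by gcongr; exact Real.rpow_le_self_of_one_le one_le_two hγ1
    calc ‖vpow γ A - vpow γ B‖ ≤ ‖vpow γ A‖ + ‖vpow γ B‖ := norm_sub_le _ _
      _ = s ^ γ + t ^ γ := by rw [norm_vpow hγ0, norm_vpow hγ0]
      _ ≤ 2 * d ^ γ + d ^ γ := by gcongr
      _ = 3 * d ^ γ := by ring
  -- For `d < t` both points are far from the origin compared with `d`: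
  -- split off the linear term `t^{γ-1} • (A - B)`.
  have ht : 0 < t := hd.trans htd
  have hs : 0 < s := ht.trans_le hBA
  have hst : s ^ (γ - 1) ≤ t ^ (γ - 1) := Real.rpow_le_rpow_of_nonpos ht hBA (by linarith)
  have htd' : t ^ (γ - 1) * d ≤ d ^ γ := by
    calc t ^ (γ - 1) * d ≤ d ^ (γ - 1) * d :=
          mul_le_mul_of_nonneg_right (Real.rpow_le_rpow_of_nonpos hd htd.le (by linarith)) hd.le
      _ = d ^ γ := by rw [← Real.rpow_add_one hd.ne', sub_add_cancel]
  have hdecomp : vpow γ A - vpow γ B = t ^ (γ - 1) • (A - B) + (s ^ (γ - 1) - t ^ (γ - 1)) • A := by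
    simp only [vpow, s, t]
    module
  have hlin : ‖t ^ (γ - 1) • (A - B)‖ ≤ d ^ γ := by
    rwa [norm_smul, Real.norm_of_nonneg (by positivity)]
  have hrest : ‖(s ^ (γ - 1) - t ^ (γ - 1)) • A‖ ≤ d ^ γ := by
    have hs' : s ^ (γ - 1) * s = s ^ γ := by rw [← Real.rpow_add_one hs.ne', sub_add_cancel]
    have ht' : t ^ (γ - 1) * t = t ^ γ := by rw [← Real.rpow_add_one ht.ne', sub_add_cancel]
    have hts : t ^ γ ≤ s ^ γ := by gcongr
    rw [norm_smul, Real.norm_of_nonpos (by linarith)]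
    nlinarith [Real.rpow_nonneg ht.le (γ - 1)]
  calc ‖vpow γ A - vpow γ B‖ ≤ d ^ γ + d ^ γ := by
        rw [hdecomp]; exact (norm_add_le _ _).trans (add_le_add hlin hrest)
    _ ≤ 3 * d ^ γ := by linarith [Real.rpow_nonneg hd.le γ]

lemma norm_vpow_sub_vpow_le_of_norm_le {γ : ℝ} (hγ1 : 1 ≤ γ) (hγ2 : γ ≤ 2) {A B : E}
    (hBA : ‖B‖ ≤ ‖A‖) : ‖vpow γ A - vpow γ B‖ ≤ 2 * ‖A‖ ^ (γ - 1) * ‖A - B‖ := by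
  set s := ‖A‖
  set t := ‖B‖
  set d := ‖A - B‖
  have hsd : s - t ≤ d := by linarith [norm_sub_norm_le A B]
  have hdecomp : vpow γ A - vpow γ B = s ^ (γ - 1) • (A - B) + (s ^ (γ - 1) - t ^ (γ - 1)) • B := by
    simp only [vpow, s, t]
    module
  have hlin : ‖s ^ (γ - 1) • (A - B)‖ = s ^ (γ - 1) * d := by
    rw [norm_smul, Real.norm_of_nonneg (by positivity)]
  have hrest : ‖(s ^ (γ - 1) - t ^ (γ - 1)) • B‖ ≤ s ^ (γ - 1) * d := by
    have hts : t ^ (γ - 1) ≤ s ^ (γ - 1) := by gcongr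
    rw [norm_smul, Real.norm_of_nonneg (by linarith)]
    change (s ^ (γ - 1) - t ^ (γ - 1)) * t ≤ s ^ (γ - 1) * d
    rcases (show 0 ≤ t from norm_nonneg B).eq_or_lt with ht | ht
    · rw [← ht, mul_zero]; positivity
    -- Concavity of `x ↦ x^{γ-1}`, via antitonicity of `x ↦ x^{γ-2}`.
    have hconc : s ^ (γ - 1) * t ≤ t ^ (γ - 1) * s := by
      have h := Real.rpow_le_rpow_of_nonpos ht hBA (show γ - 2 ≤ 0 by linarith)
      have hs' : s ^ (γ - 1) = s ^ (γ - 2) * s := by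
        rw [← Real.rpow_add_one (ht.trans_le hBA).ne']; ring_nf
      have ht' : t ^ (γ - 1) = t ^ (γ - 2) * t := by
        rw [← Real.rpow_add_one ht.ne']; ring_nf
      rw [hs', ht']
      have := mul_le_mul_of_nonneg_right h (mul_nonneg ht.le (ht.le.trans hBA))
      linarith
    calc (s ^ (γ - 1) - t ^ (γ - 1)) * t ≤ t ^ (γ - 1) * (s - t) := by linarith
      _ ≤ s ^ (γ - 1) * d := by gcongr
  calc ‖vpow γ A - vpow γ B‖ ≤ s ^ (γ - 1) * d + s ^ (γ - 1) * d := by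
        rw [hdecomp]; exact (norm_add_le _ _).trans (add_le_add hlin.le hrest)
    _ = 2 * s ^ (γ - 1) * d := by ring

lemma norm_sub_rpow_two_mul_le_of_one_le {α : ℝ} (hα : 1 ≤ α) (a b : E) :
    ‖a - b‖ ^ (2 * α) ≤ 3 ^ α * ((‖a‖ + ‖b‖) ^ α * ‖vpow α a - vpow α b‖) := by
  have hα0 : 0 < α := by linarith
  set D := ‖vpow α a - vpow α b‖
  have hHolder : ‖a - b‖ ≤ 3 * D ^ α⁻¹ := by
    simpa only [vpow_inv_vpow hα0] using
      norm_vpow_sub_vpow_le (inv_pos.mpr hα0) (inv_le_one_of_one_le₀ hα) (vpow α a) (vpow α b)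
  have hD : ‖a - b‖ ^ α ≤ 3 ^ α * D := calc
    ‖a - b‖ ^ α ≤ (3 * D ^ α⁻¹) ^ α := by gcongr
    _ = 3 ^ α * D := by
      rw [Real.mul_rpow zero_le_three (by positivity), ← Real.rpow_mul (norm_nonneg _),
        inv_mul_cancel₀ hα0.ne', Real.rpow_one]
  have hS : ‖a - b‖ ^ α ≤ (‖a‖ + ‖b‖) ^ α := by gcongr; exact norm_sub_le a b
  calc ‖a - b‖ ^ (2 * α) = ‖a - b‖ ^ α * ‖a - b‖ ^ α := by
        rw [two_mul, Real.rpow_add' (norm_nonneg _) (by positivity)]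
    _ ≤ (‖a‖ + ‖b‖) ^ α * (3 ^ α * D) := by gcongr
    _ = 3 ^ α * ((‖a‖ + ‖b‖) ^ α * D) := by ring

lemma norm_sub_rpow_two_mul_le_of_le_one {α : ℝ} (hα : 1 / 2 ≤ α) (hα1 : α ≤ 1) (a b : E) :
    ‖a - b‖ ^ (2 * α) ≤ 2 * ((‖a‖ + ‖b‖) ^ α * ‖vpow α a - vpow α b‖) := by
  wlog hba : ‖b‖ ≤ ‖a‖ generalizing a b
  · rw [norm_sub_rev, add_comm, norm_sub_rev (vpow α a)]
    exact this b a (le_of_not_ge hba)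
  have hα0 : 0 < α := by linarith
  set S := ‖a‖ + ‖b‖
  set D := ‖vpow α a - vpow α b‖
  have hLip : ‖a - b‖ ≤ 2 * ‖a‖ ^ (1 - α) * D := by
    have h := norm_vpow_sub_vpow_le_of_norm_le (one_le_inv₀ hα0 |>.mpr hα1)
      (inv_le_of_inv_le₀ (by norm_num) (by linarith))
      (show ‖vpow α b‖ ≤ ‖vpow α a‖ by rw [norm_vpow hα0, norm_vpow hα0]; gcongr)
    rwa [vpow_inv_vpow hα0, vpow_inv_vpow hα0, norm_vpow hα0, ← Real.rpow_mul (norm_nonneg _),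
      mul_sub, mul_inv_cancel₀ hα0.ne', mul_one] at h
  have hSa : ‖a‖ ^ (1 - α) ≤ S ^ (1 - α) := by
    gcongr
    exact le_add_of_nonneg_right (norm_nonneg b)
  calc ‖a - b‖ ^ (2 * α) = ‖a - b‖ ^ (2 * α - 1) * ‖a - b‖ := by
        conv_lhs => rw [show 2 * α = (2 * α - 1) + 1 by ring]
        rw [Real.rpow_add' (norm_nonneg _) (by linarith), Real.rpow_one]
    _ ≤ S ^ (2 * α - 1) * (2 * S ^ (1 - α) * D) := by
        gcongr
        · linarith
        · exact norm_sub_le a b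
        · exact hLip.trans (by gcongr)
    _ = 2 * (S ^ ((2 * α - 1) + (1 - α)) * D) := by
        rw [Real.rpow_add' (by positivity) (by linarith)]; ring
    _ = 2 * (S ^ α * D) := by ring_nf

lemma norm_sub_rpow_le_mul_norm_vpow_sub {p : ℝ} (hp : 1 ≤ p) (a b : E) :
    ‖a - b‖ ^ p ≤
      (3 ^ (p / 2) + 2) * ((‖a‖ + ‖b‖) ^ (p / 2) * ‖vpow (p / 2) a - vpow (p / 2) b‖) := by
  have hp2 : 2 * (p / 2) = p := by ring
  have hRHS : 0 ≤ (‖a‖ + ‖b‖) ^ (p / 2) * ‖vpow (p / 2) a - vpow (p / 2) b‖ := by positivity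
  rcases le_total 1 (p / 2) with hα | hα
  · have h := norm_sub_rpow_two_mul_le_of_one_le hα a b
    rw [hp2] at h
    nlinarith
  · have h := norm_sub_rpow_two_mul_le_of_le_one (by linarith) hα a b
    rw [hp2] at h
    nlinarith [Real.rpow_nonneg zero_le_three (p / 2)]

end Pointwise

namespace MeasureTheory

variable {E : Type*} [NormedAddCommGroup E]
  {X : Type*} [MeasurableSpace X] {μ : Measure X} {f g : X → E} {p : ℝ}

lemma MemLp.integrable_norm_add_norm_rpow (hp : 0 < p) (hf : MemLp f (ENNReal.ofReal p) μ)
    (hg : MemLp g (ENNReal.ofReal p) μ) : Integrable (fun x => (‖f x‖ + ‖g x‖) ^ p) μ := by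
  have h := (hf.norm.add hg.norm).integrable_norm_rpow (by simpa using hp) ENNReal.ofReal_ne_top
  rw [ENNReal.toReal_ofReal hp.le] at h
  refine h.congr (.of_forall fun x => ?_)
  simp only [Pi.add_apply, Real.norm_of_nonneg (add_nonneg (norm_nonneg (f x)) (norm_nonneg (g x)))]

lemma MemLp.vpow_half [NormedSpace ℝ E] (hp : 0 < p) (hf : MemLp f (ENNReal.ofReal p) μ) :
    MemLp (fun x => vpow (p / 2) (f x)) 2 μ := by
  have hmeas : AEStronglyMeasurable (fun x => vpow (p / 2) (f x)) μ :=
    (hf.aestronglyMeasurable.norm.aemeasurable.pow_const _).aestronglyMeasurable.smul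
      hf.aestronglyMeasurable
  rw [memLp_two_iff_integrable_sq_norm hmeas]
  have h := hf.integrable_norm_rpow (by simpa using hp) ENNReal.ofReal_ne_top
  rw [ENNReal.toReal_ofReal hp.le] at h
  refine h.congr (.of_forall fun x => ?_)
  simp only [norm_vpow (half_pos hp), ← Real.rpow_mul_natCast (norm_nonneg _)]
  norm_num

lemma integral_norm_sub_rpow_le [NormedSpace ℝ E] (hp : 1 ≤ p) (hf : MemLp f (ENNReal.ofReal p) μ)
    (hg : MemLp g (ENNReal.ofReal p) μ) :
    ∫ x, ‖f x - g x‖ ^ p ∂μ ≤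
      (3 ^ (p / 2) + 2) * (∫ x, (‖f x‖ + ‖g x‖) ^ p ∂μ) ^ ((1 : ℝ) / 2) *
        (∫ x, ‖vpow (p / 2) (f x) - vpow (p / 2) (g x)‖ ^ (2 : ℕ) ∂μ) ^ ((1 : ℝ) / 2) := by
  have hp0 : 0 < p := by linarith
  set F : X → ℝ := fun x => (‖f x‖ + ‖g x‖) ^ (p / 2)
  set G : X → ℝ := fun x => ‖vpow (p / 2) (f x) - vpow (p / 2) (g x)‖
  have hF_sq : ∀ x, F x ^ 2 = (‖f x‖ + ‖g x‖) ^ p := fun x => by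
    rw [← Real.rpow_mul_natCast (by positivity)]; ring_nf
  have hF : MemLp F 2 μ := by
    refine (memLp_two_iff_integrable_sq ?_).mpr ?_
    · exact ((hf.norm.add hg.norm).aestronglyMeasurable.aemeasurable.pow_const _)
        |>.aestronglyMeasurable
    · simpa only [hF_sq] using hf.integrable_norm_add_norm_rpow hp0 hg
  have hG : MemLp G 2 μ := ((hf.vpow_half hp0).sub (hg.vpow_half hp0)).norm
  have hCS := integral_mul_le_Lp_mul_Lq_of_nonneg (f := F) (g := G) Real.HolderConjugate.two_two
    (.of_forall fun x => by positivity) (.of_forall fun x => norm_nonneg _)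
    (by rwa [ENNReal.ofReal_ofNat]) (by rwa [ENNReal.ofReal_ofNat])
  simp only [Real.rpow_two, hF_sq] at hCS
  calc ∫ x, ‖f x - g x‖ ^ p ∂μ ≤ ∫ x, (3 ^ (p / 2) + 2) * (F x * G x) ∂μ :=
        integral_mono_of_nonneg (.of_forall fun x => by positivity)
          ((hF.integrable_mul hG).const_mul _)
          (.of_forall fun x => norm_sub_rpow_le_mul_norm_vpow_sub hp (f x) (g x))
    _ = (3 ^ (p / 2) + 2) * ∫ x, F x * G x ∂μ := integral_const_mul _ _
    _ ≤ _ := by rw [mul_assoc]; gcongr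

end MeasureTheory

/-- There is a constant `c > 0` depending only on `q > 0` such that for all `n, N ≥ 1`,
measurable `Ω ⊆ ℝ^n`, and `w₁, w₂ ∈ L^{q+1}(Ω, ℝ^N)`:
`∫_Ω |w₁ − w₂|^{q+1} ≤ c·(∫_Ω (|w₁| + |w₂|)^{q+1})^{1/2}·(∫_Ω |w₁^{⟨(q+1)/2⟩} − w₂^{⟨(q+1)/2⟩}|²)^{1/2}`,
with both integrals on the right-hand side finite. -/
theorem stmt19 (q : ℝ) (hq : 0 < q) :
    ∃ c : ℝ, 0 < c ∧ ∀ (n N : ℕ), 1 ≤ n → 1 ≤ N →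
      ∀ (Ω : Set (EuclideanSpace ℝ (Fin n))), MeasurableSet Ω →
      ∀ w₁ w₂ : EuclideanSpace ℝ (Fin n) → EuclideanSpace ℝ (Fin N),
        MemLp w₁ (ENNReal.ofReal (q + 1)) (volume.restrict Ω) →
        MemLp w₂ (ENNReal.ofReal (q + 1)) (volume.restrict Ω) →
        IntegrableOn (fun x => (‖w₁ x‖ + ‖w₂ x‖) ^ (q + 1)) Ω ∧
        IntegrableOn (fun x => ‖vpow ((q + 1) / 2) (w₁ x) - vpow ((q + 1) / 2) (w₂ x)‖ ^ (2:ℕ)) Ω ∧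
        ∫ x in Ω, ‖w₁ x - w₂ x‖ ^ (q + 1) ≤
          c * (∫ x in Ω, (‖w₁ x‖ + ‖w₂ x‖) ^ (q + 1)) ^ ((1:ℝ) / 2) *
            (∫ x in Ω, ‖vpow ((q + 1) / 2) (w₁ x) - vpow ((q + 1) / 2) (w₂ x)‖ ^ (2:ℕ)) ^ ((1:ℝ) / 2) := by
  refine ⟨3 ^ ((q + 1) / 2) + 2, by positivity, fun n N _ _ Ω _ w₁ w₂ hw₁ hw₂ => ?_⟩
  have hp : (1 : ℝ) ≤ q + 1 := by linarith
  have hp0 : (0 : ℝ) < q + 1 := by linarith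
  exact ⟨hw₁.integrable_norm_add_norm_rpow hp0 hw₂,
    ((hw₁.vpow_half hp0).sub (hw₂.vpow_half hp0)).norm.integrable_sq,
    integral_norm_sub_rpow_le hp hw₁ hw₂⟩
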